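/- arXiv:1908.11271 — 5 statements merged into one kernel-verified Lean document; each statement's English description precedes it below -/
import Mathlib

section
/- The set of fast points of a Boolean function f: F₂ⁿ → F₂ of degree d ≥ 1, together with the zero vector, forms an F₂-vector subspace of F₂ⁿ, where a point a is a fast point if deg(D_a f) < d − 1 (and the zero vector is included by convention). -/
open MvPolynomial

/-- First-order derivative of a Boolean function: `D_a f (x) = f (x + a) + f x`. -/
def bderiv {V : Type} [Add V] (f : V → ZMod 2) (a : V) : V → ZMod 2 :=
  fun x => f (x + a) + f x

/-- The algebraic degree of a Boolean function: the minimal total degree of a polynomial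
representing it (this equals the degree of its algebraic normal form). -/
noncomputable def bdeg {σ : Type} (f : (σ → ZMod 2) → ZMod 2) : ℕ :=
  sInf { d | ∃ p : MvPolynomial σ (ZMod 2),
    (∀ x, MvPolynomial.eval x p = f x) ∧ p.totalDegree = d }

private lemma zmod2_aux : ∀ u v : ZMod 2, u + v + 1 = if u = v then 1 else 0 := by decide

/-- Every Boolean function on `F₂ⁿ` is represented by some polynomial. -/
lemma exists_repr {n : ℕ} (f : (Fin n → ZMod 2) → ZMod 2) :
    ∃ p : MvPolynomial (Fin n) (ZMod 2), ∀ x, MvPolynomial.eval x p = f x := by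
  classical
  refine ⟨∑ y : Fin n → ZMod 2, MvPolynomial.C (f y) *
      ∏ i, (MvPolynomial.X i + MvPolynomial.C (y i) + 1), fun x => ?_⟩
  have h : ∀ y : Fin n → ZMod 2, (∏ i, (x i + y i + 1)) = if x = y then 1 else 0 := by
    intro y
    calc (∏ i, (x i + y i + 1)) = ∏ i, (if x i = y i then (1 : ZMod 2) else 0) :=
          Finset.prod_congr rfl fun i _ => zmod2_aux _ _
      _ = if x = y then 1 else 0 := by
          rw [Finset.prod_boole]
          by_cases hxy : x = y
          · subst hxy; simp
          · rw [if_neg, if_neg hxy]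
            intro h
            exact hxy (funext fun i => h i (Finset.mem_univ i))
  simp only [map_sum, map_mul, map_prod, map_add, MvPolynomial.eval_C, MvPolynomial.eval_X,
    map_one, h, mul_ite, mul_one, mul_zero]
  simp

lemma bdeg_spec {n : ℕ} (f : (Fin n → ZMod 2) → ZMod 2) :
    ∃ p : MvPolynomial (Fin n) (ZMod 2),
      (∀ x, MvPolynomial.eval x p = f x) ∧ p.totalDegree = bdeg f := by
  obtain ⟨p, hp⟩ := exists_repr f
  have hne : { d | ∃ p : MvPolynomial (Fin n) (ZMod 2),
      (∀ x, MvPolynomial.eval x p = f x) ∧ p.totalDegree = d }.Nonempty :=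
    ⟨p.totalDegree, p, hp, rfl⟩
  exact Nat.sInf_mem hne

lemma bdeg_le {n : ℕ} {f : (Fin n → ZMod 2) → ZMod 2} (p : MvPolynomial (Fin n) (ZMod 2))
    (h : ∀ x, MvPolynomial.eval x p = f x) : bdeg f ≤ p.totalDegree :=
  Nat.sInf_le ⟨p, h, rfl⟩

lemma totalDegree_bind₁_le {n : ℕ} (g : Fin n → MvPolynomial (Fin n) (ZMod 2))
    (hg : ∀ i, (g i).totalDegree ≤ 1) (p : MvPolynomial (Fin n) (ZMod 2)) :
    (MvPolynomial.bind₁ g p).totalDegree ≤ p.totalDegree := by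
  classical
  conv_lhs => rw [p.as_sum]
  rw [map_sum]
  refine (MvPolynomial.totalDegree_finset_sum _ _).trans ?_
  refine Finset.sup_le fun m hm => ?_
  rw [MvPolynomial.bind₁, MvPolynomial.aeval_monomial]
  refine (MvPolynomial.totalDegree_mul _ _).trans ?_
  have h1 : (algebraMap (ZMod 2) (MvPolynomial (Fin n) (ZMod 2)) (p.coeff m)).totalDegree = 0 :=
    MvPolynomial.totalDegree_C _
  rw [h1, zero_add]
  have h2 : (m.prod fun i k => g i ^ k).totalDegree ≤ ∑ i ∈ m.support, m i := by
    rw [Finsupp.prod]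
    refine (MvPolynomial.totalDegree_finset_prod _ _).trans ?_
    refine Finset.sum_le_sum fun i _ => ?_
    calc (g i ^ m i).totalDegree ≤ m i * (g i).totalDegree := MvPolynomial.totalDegree_pow _ _
      _ ≤ m i * 1 := Nat.mul_le_mul_left _ (hg i)
      _ = m i := Nat.mul_one _
  refine h2.trans ?_
  exact MvPolynomial.le_totalDegree hm

lemma bdeg_shift {n : ℕ} (f : (Fin n → ZMod 2) → ZMod 2) (a : Fin n → ZMod 2) :
    bdeg (fun x => f (x + a)) ≤ bdeg f := by
  obtain ⟨p, hp, hpd⟩ := bdeg_spec f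
  set q := MvPolynomial.bind₁ (fun i => MvPolynomial.X i + MvPolynomial.C (a i)) p with hq
  have heval : ∀ x, MvPolynomial.eval x q = f (x + a) := by
    intro x
    have h1 : MvPolynomial.aeval x q =
        MvPolynomial.aeval (fun i =>
          MvPolynomial.aeval x (MvPolynomial.X i + MvPolynomial.C (a i))) p :=
      MvPolynomial.aeval_bind₁ _ _ _
    have h2 : (fun i => MvPolynomial.aeval (R := ZMod 2) x
        (MvPolynomial.X i + MvPolynomial.C (a i))) = fun i => x i + a i := by
      funext i; simp
    have h3 : ∀ (r : MvPolynomial (Fin n) (ZMod 2)) (y : Fin n → ZMod 2),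
        MvPolynomial.aeval y r = MvPolynomial.eval y r := fun r y => by
      rw [MvPolynomial.aeval_def, MvPolynomial.eval]
      simp [MvPolynomial.eval₂Hom, Algebra.algebraMap_self]
    rw [← h3 q x, h1, h2, h3, hp]
    rfl
  have hdeg : q.totalDegree ≤ p.totalDegree := by
    refine totalDegree_bind₁_le _ (fun i => ?_) p
    refine (MvPolynomial.totalDegree_add _ _).trans ?_
    simp [MvPolynomial.totalDegree_X, MvPolynomial.totalDegree_C]
  exact (bdeg_le q heval).trans (hpd ▸ hdeg)

lemma bdeg_add {n : ℕ} (g h : (Fin n → ZMod 2) → ZMod 2) :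
    bdeg (fun x => g x + h x) ≤ max (bdeg g) (bdeg h) := by
  obtain ⟨p, hp, hpd⟩ := bdeg_spec g
  obtain ⟨q, hq, hqd⟩ := bdeg_spec h
  have := bdeg_le (f := fun x => g x + h x) (p + q) (fun x => by simp [hp, hq])
  exact this.trans ((MvPolynomial.totalDegree_add p q).trans (by rw [hpd, hqd]))

private lemma zmod2_aux2 : ∀ u v w : ZMod 2, w + v = (u + v) + (w + u) := by decide

/-- The set of fast points of a Boolean function of degree `d ≥ 1`, together with the zero
vector, forms an `F₂`-vector subspace of `F₂ⁿ`. -/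
theorem stmt4 {n d : ℕ} (f : (Fin n → ZMod 2) → ZMod 2)
    (hd : bdeg f = d) (h1 : 1 ≤ d) :
    ∃ U : Submodule (ZMod 2) (Fin n → ZMod 2),
      (U : Set (Fin n → ZMod 2)) = {a | a = 0 ∨ bdeg (bderiv f a) < d - 1} := by
  have key : ∀ a b : Fin n → ZMod 2,
      a ∈ {a : Fin n → ZMod 2 | a = 0 ∨ bdeg (bderiv f a) < d - 1} →
      b ∈ {a : Fin n → ZMod 2 | a = 0 ∨ bdeg (bderiv f a) < d - 1} →
      a + b ∈ {a : Fin n → ZMod 2 | a = 0 ∨ bdeg (bderiv f a) < d - 1} := by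
    intro a b ha hb
    rcases ha with ha | ha
    · subst ha; rwa [zero_add]
    rcases hb with hb | hb
    · subst hb; rw [add_zero]; exact Or.inr ha
    right
    have hsplit : bderiv f (a + b) =
        fun x => bderiv f a x + (fun y => bderiv f b (y + a)) x := by
      funext x
      show f (x + (a + b)) + f x = (f (x + a) + f x) + (f ((x + a) + b) + f (x + a))
      rw [← add_assoc]
      exact zmod2_aux2 (f (x + a)) (f x) (f (x + a + b))
    calc bdeg (bderiv f (a + b))
        ≤ max (bdeg (bderiv f a)) (bdeg (fun y => bderiv f b (y + a))) := by
          rw [hsplit]; exact bdeg_add _ _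
      _ < d - 1 := by
          refine max_lt ha (lt_of_le_of_lt ?_ hb)
          exact bdeg_shift (bderiv f b) a
  refine ⟨{ carrier := {a | a = 0 ∨ bdeg (bderiv f a) < d - 1}
            add_mem' := fun {a b} ha hb => key a b ha hb
            zero_mem' := Or.inl rfl
            smul_mem' := ?_ }, rfl⟩
  intro c x hx
  have hc : c = 0 ∨ c = 1 := by
    have : ∀ c : ZMod 2, c = 0 ∨ c = 1 := by decide
    exact this c
  rcases hc with hc | hc
  · subst hc; rw [zero_smul]; exact Or.inl rfl
  · subst hc; rw [one_smul]; exact hx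
end

section
/- Let h(x,y) = f(x) + g(y) be the direct sum of Boolean functions f: F₂ⁿ → F₂ and g: F₂ᵐ → F₂. For every relaxed M-subspace U of h there exist a relaxed M-subspace V of f and a relaxed M-subspace W of g such that U ⊆ V × W. -/
/-- `U` is a relaxed `M`-subspace of `f` if all second-order derivatives along `U`
are constant functions. -/
def IsRMS {V : Type} [AddCommGroup V] [Module (ZMod 2) V]
    (f : V → ZMod 2) (U : Submodule (ZMod 2) V) : Prop :=
  ∀ a ∈ U, ∀ b ∈ U, ∃ c : ZMod 2, ∀ x : V, f (x + a + b) + f (x + a) + f (x + b) + f x = c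

/-- Every relaxed `M`-subspace `U` of the direct sum `h (x, y) = f x + g y` is contained in
a product `V × W` of relaxed `M`-subspaces of `f` and `g`. -/
theorem stmt7 {n m : ℕ} (f : (Fin n → ZMod 2) → ZMod 2) (g : (Fin m → ZMod 2) → ZMod 2)
    (U : Submodule (ZMod 2) ((Fin n → ZMod 2) × (Fin m → ZMod 2)))
    (hU : IsRMS (fun p : (Fin n → ZMod 2) × (Fin m → ZMod 2) => f p.1 + g p.2) U) :
    ∃ (V : Submodule (ZMod 2) (Fin n → ZMod 2)) (W : Submodule (ZMod 2) (Fin m → ZMod 2)),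
      IsRMS f V ∧ IsRMS g W ∧ U ≤ V.prod W := by
  refine ⟨U.map (LinearMap.fst _ _ _), U.map (LinearMap.snd _ _ _), ?_, ?_, ?_⟩
  · rintro a ⟨p, hp, rfl⟩ b ⟨q, hq, rfl⟩
    obtain ⟨c, hc⟩ := hU p hp q hq
    refine ⟨c + (g (p.2 + q.2) + g p.2 + g q.2 + g 0), fun x => ?_⟩
    have h1 := hc (x, 0)
    simp only [Prod.fst_add, Prod.snd_add, LinearMap.fst_apply, zero_add] at h1 ⊢
    have h2 : (2 : ZMod 2) = 0 := by decide
    linear_combination h1 - (g (p.2 + q.2) + g p.2 + g q.2 + g 0) * h2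
  · rintro a ⟨p, hp, rfl⟩ b ⟨q, hq, rfl⟩
    obtain ⟨c, hc⟩ := hU p hp q hq
    refine ⟨c + (f (p.1 + q.1) + f p.1 + f q.1 + f 0), fun y => ?_⟩
    have h1 := hc (0, y)
    simp only [Prod.fst_add, Prod.snd_add, LinearMap.snd_apply, zero_add] at h1 ⊢
    have h2 : (2 : ZMod 2) = 0 := by decide
    linear_combination h1 - (f (p.1 + q.1) + f p.1 + f q.1 + f 0) * h2
  · intro p hp
    exact ⟨⟨p, hp, rfl⟩, ⟨p, hp, rfl⟩⟩
end

section
/- The relaxed linearity index of a direct sum is subadditive: rind(f ⊕ g) ≤ rind(f) + rind(g), where f ⊕ g denotes the direct sum h(x,y) = f(x) + g(y) of Boolean functions f: F₂ⁿ → F₂ and g: F₂ᵐ → F₂. -/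
/-- The relaxed linearity index: the maximal dimension of a relaxed `M`-subspace. -/
noncomputable def rind {V : Type} [AddCommGroup V] [Module (ZMod 2) V]
    (f : V → ZMod 2) : ℕ :=
  sSup { d | ∃ U : Submodule (ZMod 2) V, IsRMS f U ∧ Module.finrank (ZMod 2) U = d }

lemma isRMS_bot {V : Type} [AddCommGroup V] [Module (ZMod 2) V] (f : V → ZMod 2) :
    IsRMS f ⊥ := by
  intro a ha b hb
  simp only [Submodule.mem_bot] at ha hb
  subst ha; subst hb
  exact ⟨0, fun x => by simp [CharTwo.add_self_eq_zero]⟩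

lemma rind_bddAbove {n : ℕ} (f : (Fin n → ZMod 2) → ZMod 2) :
    BddAbove { d | ∃ U : Submodule (ZMod 2) (Fin n → ZMod 2),
      IsRMS f U ∧ Module.finrank (ZMod 2) U = d } := by
  refine ⟨Module.finrank (ZMod 2) (Fin n → ZMod 2), ?_⟩
  rintro d ⟨U, _, rfl⟩
  exact U.finrank_le

lemma le_rind {n : ℕ} (f : (Fin n → ZMod 2) → ZMod 2)
    (U : Submodule (ZMod 2) (Fin n → ZMod 2)) (hU : IsRMS f U) :
    Module.finrank (ZMod 2) U ≤ rind f :=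
  le_csSup (rind_bddAbove f) ⟨U, hU, rfl⟩

/-- In an abelian group: if `B + B = 0` and `A + B = c` then `A = c + B`. -/
lemma charTwo_shift {R : Type*} [AddCommGroup R] (A B c : R) (h2 : B + B = 0)
    (h : A + B = c) : A = c + B := by
  calc A = A + (B + B) := by rw [h2, add_zero]
    _ = (A + B) + B := by abel
    _ = c + B := by rw [h]

/-- The relaxed linearity index of a direct sum is subadditive:
`rind (f ⊕ g) ≤ rind f + rind g`. -/
theorem stmt8 {n m : ℕ} (f : (Fin n → ZMod 2) → ZMod 2) (g : (Fin m → ZMod 2) → ZMod 2) :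
    rind (fun p : (Fin n → ZMod 2) × (Fin m → ZMod 2) => f p.1 + g p.2)
      ≤ rind f + rind g := by
  set h : (Fin n → ZMod 2) × (Fin m → ZMod 2) → ZMod 2 := fun p => f p.1 + g p.2 with hh
  have hne : { d | ∃ U : Submodule (ZMod 2) ((Fin n → ZMod 2) × (Fin m → ZMod 2)),
      IsRMS h U ∧ Module.finrank (ZMod 2) U = d }.Nonempty :=
    ⟨0, ⊥, isRMS_bot h, by simp⟩
  apply csSup_le hne
  rintro d ⟨U, hU, rfl⟩
  set Uf := U.map (LinearMap.fst (ZMod 2) (Fin n → ZMod 2) (Fin m → ZMod 2)) with hUf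
  set Ug := U.map (LinearMap.snd (ZMod 2) (Fin n → ZMod 2) (Fin m → ZMod 2)) with hUg
  -- Uf is an RMS subspace of f
  have hUfRMS : IsRMS f Uf := by
    rintro a ⟨p, hp, rfl⟩ b ⟨q, hq, rfl⟩
    obtain ⟨c, hc⟩ := hU p hp q hq
    refine ⟨c + (g (0 + p.2 + q.2) + g (0 + p.2) + g (0 + q.2) + g 0), fun x => ?_⟩
    simp only [LinearMap.fst_apply]
    have hx := hc (x, 0)
    simp only [hh, Prod.fst_add, Prod.snd_add] at hx
    refine charTwo_shift _ _ _ (CharTwo.add_self_eq_zero _) ?_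
    rw [← hx]; abel
  -- Ug is an RMS subspace of g
  have hUgRMS : IsRMS g Ug := by
    rintro a ⟨p, hp, rfl⟩ b ⟨q, hq, rfl⟩
    obtain ⟨c, hc⟩ := hU p hp q hq
    refine ⟨c + (f (0 + p.1 + q.1) + f (0 + p.1) + f (0 + q.1) + f 0), fun y => ?_⟩
    simp only [LinearMap.snd_apply]
    have hy := hc (0, y)
    simp only [hh, Prod.fst_add, Prod.snd_add] at hy
    refine charTwo_shift _ _ _ (CharTwo.add_self_eq_zero _) ?_
    rw [← hy]; abel
  -- finrank U ≤ finrank Uf + finrank Ug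
  have hmemf : ∀ u : U, (u : (Fin n → ZMod 2) × (Fin m → ZMod 2)).1 ∈ Uf :=
    fun u => ⟨(u : (Fin n → ZMod 2) × (Fin m → ZMod 2)), u.2, rfl⟩
  have hmemg : ∀ u : U, (u : (Fin n → ZMod 2) × (Fin m → ZMod 2)).2 ∈ Ug :=
    fun u => ⟨(u : (Fin n → ZMod 2) × (Fin m → ZMod 2)), u.2, rfl⟩
  let φ : U →ₗ[ZMod 2] Uf × Ug :=
    LinearMap.prod
      (LinearMap.codRestrict Uf
        ((LinearMap.fst (ZMod 2) (Fin n → ZMod 2) (Fin m → ZMod 2)).comp U.subtype) hmemf)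
      (LinearMap.codRestrict Ug
        ((LinearMap.snd (ZMod 2) (Fin n → ZMod 2) (Fin m → ZMod 2)).comp U.subtype) hmemg)
  have hφ : Function.Injective φ := by
    intro u v huv
    have h1 : ((φ u).1 : Fin n → ZMod 2) = ((φ v).1 : Fin n → ZMod 2) := by rw [huv]
    have h2 : ((φ u).2 : Fin m → ZMod 2) = ((φ v).2 : Fin m → ZMod 2) := by rw [huv]
    exact Subtype.ext (Prod.ext h1 h2)
  calc Module.finrank (ZMod 2) U ≤ Module.finrank (ZMod 2) (Uf × Ug) :=
        LinearMap.finrank_le_finrank_of_injective hφ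
    _ = Module.finrank (ZMod 2) Uf + Module.finrank (ZMod 2) Ug := Module.finrank_prod
    _ ≤ rind f + rind g := add_le_add (le_rind f Uf hUfRMS) (le_rind g Ug hUgRMS)
end

section
/- The Maiorana-McFarland function f_{π,φ}(x,y) = ⟨x, π(y)⟩ + φ(y) on F₂ᵐ × F₂ᵐ is bent if and only if π is a permutation of F₂ᵐ. -/
namespace MM14

def e (b : ZMod 2) : ℤ := if b = 0 then 1 else -1

lemma e_add (b c : ZMod 2) : e (b + c) = e b * e c := by revert b c; decide

lemma e_zero : e 0 = 1 := rfl

lemma e_one_add (t : ZMod 2) : e (1 + t) = - e t := by revert t; decide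

variable {m : ℕ}

def ip (x w : Fin m → ZMod 2) : ZMod 2 := ∑ i, x i * w i

lemma ip_add_left (x y w : Fin m → ZMod 2) : ip (x + y) w = ip x w + ip y w := by
  simp [ip, add_mul, Finset.sum_add_distrib]

lemma ip_add_right (x y w : Fin m → ZMod 2) : ip x (y + w) = ip x y + ip x w := by
  simp [ip, mul_add, Finset.sum_add_distrib]

lemma ip_comm (x w : Fin m → ZMod 2) : ip x w = ip w x := by
  simp [ip, mul_comm]

lemma ip_zero_left (w : Fin m → ZMod 2) : ip 0 w = 0 := by simp [ip]

lemma ip_zero_right (w : Fin m → ZMod 2) : ip w 0 = 0 := by simp [ip]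

lemma zmod2_add_self (t : ZMod 2) : t + t = 0 := by revert t; decide

lemma pi_add_self (x : Fin m → ZMod 2) : x + x = 0 := by
  funext i; exact zmod2_add_self (x i)

lemma prod_add_self (p : (Fin m → ZMod 2) × (Fin m → ZMod 2)) : p + p = 0 :=
  Prod.ext (pi_add_self _) (pi_add_self _)

lemma pi_add_eq_zero_iff (u w : Fin m → ZMod 2) : u + w = 0 ↔ u = w := by
  constructor
  · intro h; funext i
    have h2 : ∀ s t : ZMod 2, s + t = 0 → s = t := by decide
    exact h2 _ _ (by simpa using congrFun h i)
  · rintro rfl; exact pi_add_self u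

lemma card_V : Fintype.card (Fin m → ZMod 2) = 2 ^ m := by
  simp

lemma char_sum (w : Fin m → ZMod 2) :
    ∑ x : Fin m → ZMod 2, e (ip x w) = if w = 0 then (2 ^ m : ℤ) else 0 := by
  split_ifs with hw
  · subst hw
    simp [ip_zero_right, e_zero]
  · obtain ⟨i₀, hi₀⟩ : ∃ i, w i ≠ 0 := by
      by_contra hc; push_neg at hc; exact hw (funext hc)
    have hw1 : w i₀ = 1 := by revert hi₀; generalize w i₀ = t; revert t; decide
    set δ : Fin m → ZMod 2 := Pi.single i₀ 1 with hδ
    have hipδ : ip δ w = 1 := by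
      rw [ip, Finset.sum_eq_single i₀]
      · simp [hδ, hw1]
      · intro i _ hne; simp [hδ, Pi.single_eq_of_ne hne]
      · simp
    have key : ∑ x : Fin m → ZMod 2, e (ip (δ + x) w)
        = ∑ x : Fin m → ZMod 2, e (ip x w) :=
      Fintype.sum_equiv (Equiv.addLeft δ) _ _ (fun x => rfl)
    have key2 : ∑ x : Fin m → ZMod 2, e (ip (δ + x) w)
        = - ∑ x : Fin m → ZMod 2, e (ip x w) := by
      rw [← Finset.sum_neg_distrib]
      exact Finset.sum_congr rfl fun x _ => by rw [ip_add_left, hipδ, e_one_add]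
    linarith [key, key2]

lemma balanced_iff {α : Type*} [Fintype α] (g : α → ZMod 2) (k : ℕ)
    (hc : Fintype.card α = 2 * k) :
    (∀ b : ZMod 2, Nat.card {x | g x = b} = k) ↔ (∑ x, e (g x)) = 0 := by
  classical
  have hN : ∀ b : ZMod 2, Nat.card {x | g x = b}
      = (Finset.univ.filter (fun x => g x = b)).card := by
    intro b
    rw [Nat.card_eq_fintype_card]
    exact Fintype.card_subtype _
  have h01 : (Finset.univ.filter (fun x => g x = 0)).card
      + (Finset.univ.filter (fun x => g x = 1)).card = Fintype.card α := by
    have hfilt : Finset.univ.filter (fun x => g x = 1)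
        = Finset.univ.filter (fun x => ¬ g x = 0) := by
      apply Finset.filter_congr
      intro x _
      have : ∀ t : ZMod 2, t = 1 ↔ ¬ t = 0 := by decide
      simp [this]
    rw [hfilt, Finset.card_filter_add_card_filter_not (p := fun x => g x = 0)]
    exact Finset.card_univ
  have hdiff : (∑ x, e (g x))
      = ((Finset.univ.filter (fun x => g x = 0)).card : ℤ)
        - ((Finset.univ.filter (fun x => g x = 1)).card : ℤ) := by
    have : ∀ x : α, e (g x) = if g x = 0 then (1 : ℤ) else -1 := fun x => rfl
    simp only [this]
    rw [Finset.sum_ite, Finset.sum_const, Finset.sum_const]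
    have hfilt : Finset.univ.filter (fun x => ¬ g x = 0)
        = Finset.univ.filter (fun x => g x = 1) := by
      apply Finset.filter_congr
      intro x _
      have : ∀ t : ZMod 2, ¬ t = 0 ↔ t = 1 := by decide
      simp [this]
    rw [hfilt]
    ring
  constructor
  · intro h
    rw [hdiff]
    have h0 := h 0; have h1 := h 1
    rw [hN] at h0 h1
    rw [h0, h1]; ring
  · intro h b
    rw [hN]
    have hb : b = 0 ∨ b = 1 := by revert b; decide
    rw [hdiff] at h
    rw [hc] at h01
    rcases hb with rfl | rfl <;> omega

end MM14

/-- The Maiorana-McFarland function `f_{π,φ}(x,y) = ⟨x, π y⟩ + φ y` on `F₂ᵐ × F₂ᵐ` is bent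
if and only if `π` is a permutation of `F₂ᵐ`. -/
theorem stmt14 {m : ℕ} (π : (Fin m → ZMod 2) → (Fin m → ZMod 2))
    (φ : (Fin m → ZMod 2) → ZMod 2)
    (F : (Fin m → ZMod 2) × (Fin m → ZMod 2) → ZMod 2)
    (hF : ∀ p : (Fin m → ZMod 2) × (Fin m → ZMod 2),
      F p = (∑ i, p.1 i * π p.2 i) + φ p.2) :
    (∀ a : (Fin m → ZMod 2) × (Fin m → ZMod 2), a ≠ 0 → ∀ b : ZMod 2,
        Nat.card {x : (Fin m → ZMod 2) × (Fin m → ZMod 2) | F (x + a) + F x = b}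
          = 2 ^ (2 * m - 1))
      ↔ Function.Bijective π := by
  classical
  rcases Nat.eq_zero_or_pos m with hm | hm
  · subst hm
    constructor
    · intro _
      exact ⟨fun a b _ => Subsingleton.elim a b, fun z => ⟨z, Subsingleton.elim _ _⟩⟩
    · intro _ a ha b
      exact absurd (Subsingleton.elim a 0) ha
  · have hF' : ∀ p : (Fin m → ZMod 2) × (Fin m → ZMod 2),
        F p = MM14.ip p.1 (π p.2) + φ p.2 := hF
    have hcard : Fintype.card ((Fin m → ZMod 2) × (Fin m → ZMod 2))
        = 2 * 2 ^ (2 * m - 1) := by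
      rw [Fintype.card_prod, MM14.card_V, ← pow_add, ← pow_succ']
      congr 1
      omega
    have hiff : ∀ a : (Fin m → ZMod 2) × (Fin m → ZMod 2),
        ((∀ b : ZMod 2,
          Nat.card {x : (Fin m → ZMod 2) × (Fin m → ZMod 2) | F (x + a) + F x = b}
            = 2 ^ (2 * m - 1)) ↔
        (∑ p : (Fin m → ZMod 2) × (Fin m → ZMod 2), MM14.e (F (p + a) + F p)) = 0) :=
      fun a => MM14.balanced_iff (fun p => F (p + a) + F p) _ hcard
    have hder : ∀ (a₁ a₂ x y : Fin m → ZMod 2),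
        F ((x, y) + (a₁, a₂)) + F (x, y)
          = MM14.ip x (π (y + a₂) + π y)
            + (MM14.ip a₁ (π (y + a₂)) + (φ (y + a₂) + φ y)) := by
      intro a₁ a₂ x y
      have hadd : (x, y) + (a₁, a₂) = (x + a₁, y + a₂) := rfl
      rw [hadd, hF' (x + a₁, y + a₂), hF' (x, y)]
      simp only
      rw [MM14.ip_add_left x a₁ (π (y + a₂)), MM14.ip_add_right x (π (y + a₂)) (π y)]
      ring
    constructor
    · intro h
      have hS : ∀ a : (Fin m → ZMod 2) × (Fin m → ZMod 2), a ≠ 0 →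
          (∑ p : (Fin m → ZMod 2) × (Fin m → ZMod 2), MM14.e (F (p + a) + F p)) = 0 :=
        fun a ha => (hiff a).mp (h a ha)
      rw [← Finite.surjective_iff_bijective]
      intro u₁
      by_contra hu
      push_neg at hu
      have hT0 : (∑ p : (Fin m → ZMod 2) × (Fin m → ZMod 2),
          MM14.e (F p + MM14.ip p.1 u₁)) = 0 := by
        rw [Fintype.sum_prod_type, Finset.sum_comm]
        apply Finset.sum_eq_zero
        intro y _
        have h1 : ∀ x : Fin m → ZMod 2,
            F (x, y) + MM14.ip x u₁ = MM14.ip x (π y + u₁) + φ y := by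
          intro x
          rw [hF' (x, y)]
          simp only
          rw [MM14.ip_add_right x (π y) u₁]
          ring
        have h2 : ∑ x : Fin m → ZMod 2, MM14.e (F (x, y) + MM14.ip x u₁)
            = (∑ x : Fin m → ZMod 2, MM14.e (MM14.ip x (π y + u₁))) * MM14.e (φ y) := by
          rw [Finset.sum_mul]
          exact Finset.sum_congr rfl fun x _ => by rw [h1 x, MM14.e_add]
        rw [h2, MM14.char_sum, if_neg, zero_mul]
        intro h0
        exact hu y ((MM14.pi_add_eq_zero_iff _ _).mp h0)
      have hTsq : (∑ p : (Fin m → ZMod 2) × (Fin m → ZMod 2),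
            MM14.e (F p + MM14.ip p.1 u₁))
          * (∑ p : (Fin m → ZMod 2) × (Fin m → ZMod 2),
            MM14.e (F p + MM14.ip p.1 u₁)) = (2 : ℤ) ^ (2 * m) := by
        have stepB : ∑ a : (Fin m → ZMod 2) × (Fin m → ZMod 2),
            MM14.e (MM14.ip a.1 u₁)
              * (∑ x : (Fin m → ZMod 2) × (Fin m → ZMod 2), MM14.e (F (x + a) + F x))
            = (∑ p : (Fin m → ZMod 2) × (Fin m → ZMod 2),
                MM14.e (F p + MM14.ip p.1 u₁))
              * (∑ p : (Fin m → ZMod 2) × (Fin m → ZMod 2),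
                MM14.e (F p + MM14.ip p.1 u₁)) := by
          have e1 : ∀ a : (Fin m → ZMod 2) × (Fin m → ZMod 2),
              MM14.e (MM14.ip a.1 u₁)
                * (∑ x : (Fin m → ZMod 2) × (Fin m → ZMod 2), MM14.e (F (x + a) + F x))
              = ∑ x : (Fin m → ZMod 2) × (Fin m → ZMod 2),
                  MM14.e (F (x + a) + F x + MM14.ip a.1 u₁) := by
            intro a
            rw [Finset.mul_sum]
            exact Finset.sum_congr rfl fun x _ => by rw [mul_comm, ← MM14.e_add]
          simp only [e1]
          rw [Finset.sum_comm]
          have e2 : ∀ x : (Fin m → ZMod 2) × (Fin m → ZMod 2),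
              (∑ a : (Fin m → ZMod 2) × (Fin m → ZMod 2),
                MM14.e (F (x + a) + F x + MM14.ip a.1 u₁))
              = (∑ z : (Fin m → ZMod 2) × (Fin m → ZMod 2),
                  MM14.e (F z + MM14.ip z.1 u₁)) * MM14.e (F x + MM14.ip x.1 u₁) := by
            intro x
            have e3 : ∑ z : (Fin m → ZMod 2) × (Fin m → ZMod 2),
                MM14.e (F (x + (x + z)) + F x + MM14.ip (x + z).1 u₁)
                = ∑ a : (Fin m → ZMod 2) × (Fin m → ZMod 2),
                  MM14.e (F (x + a) + F x + MM14.ip a.1 u₁) :=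
              Fintype.sum_equiv (Equiv.addLeft x) _ _ (fun z => rfl)
            rw [← e3, Finset.sum_mul]
            apply Finset.sum_congr rfl
            intro z _
            have hz : x + (x + z) = z := by
              rw [← add_assoc, MM14.prod_add_self, zero_add]
            rw [hz]
            have hip : MM14.ip (x + z).1 u₁ = MM14.ip x.1 u₁ + MM14.ip z.1 u₁ :=
              MM14.ip_add_left x.1 z.1 u₁
            rw [hip]
            rw [show F z + F x + (MM14.ip x.1 u₁ + MM14.ip z.1 u₁)
              = (F z + MM14.ip z.1 u₁) + (F x + MM14.ip x.1 u₁) by ring]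
            rw [MM14.e_add]
          simp only [e2]
          rw [← Finset.mul_sum]
        have stepA : ∑ a : (Fin m → ZMod 2) × (Fin m → ZMod 2),
            MM14.e (MM14.ip a.1 u₁)
              * (∑ x : (Fin m → ZMod 2) × (Fin m → ZMod 2), MM14.e (F (x + a) + F x))
            = (2 : ℤ) ^ (2 * m) := by
          rw [Finset.sum_eq_single 0]
          · have hz : ∀ x : (Fin m → ZMod 2) × (Fin m → ZMod 2),
                MM14.e (F (x + 0) + F x) = 1 := by
              intro x
              rw [add_zero]
              have : F x + F x = 0 := MM14.zmod2_add_self (F x)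
              rw [this, MM14.e_zero]
            simp only [hz]
            have : MM14.e (MM14.ip (0 : (Fin m → ZMod 2) × (Fin m → ZMod 2)).1 u₁) = 1 := by
              rw [show ((0 : (Fin m → ZMod 2) × (Fin m → ZMod 2)).1) = 0 from rfl,
                MM14.ip_zero_left, MM14.e_zero]
            rw [this, one_mul, Finset.sum_const, Finset.card_univ, Fintype.card_prod,
              MM14.card_V, nsmul_eq_mul, mul_one]
            push_cast
            rw [← pow_add]
            congr 1
            omega
          · intro a _ ha
            rw [hS a ha, mul_zero]
          · intro habs
            exact absurd (Finset.mem_univ 0) habs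
        rw [← stepB, stepA]
      rw [hT0, mul_zero] at hTsq
      have : (0 : ℤ) < 2 ^ (2 * m) := by positivity
      omega
    · intro hπ a ha
      rw [hiff a]
      obtain ⟨a₁, a₂⟩ := a
      have hsum : (∑ p : (Fin m → ZMod 2) × (Fin m → ZMod 2),
            MM14.e (F (p + (a₁, a₂)) + F p))
          = ∑ y : Fin m → ZMod 2,
              (∑ x : Fin m → ZMod 2, MM14.e (MM14.ip x (π (y + a₂) + π y)))
                * MM14.e (MM14.ip a₁ (π (y + a₂)) + (φ (y + a₂) + φ y)) := by
        rw [Fintype.sum_prod_type, Finset.sum_comm]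
        apply Finset.sum_congr rfl
        intro y _
        rw [Finset.sum_mul]
        apply Finset.sum_congr rfl
        intro x _
        rw [hder a₁ a₂ x y, MM14.e_add]
      rw [hsum]
      by_cases ha2 : a₂ = 0
      · subst ha2
        have ha1 : a₁ ≠ 0 := by
          intro h0
          exact ha (by rw [h0]; rfl)
        have hy : ∀ y : Fin m → ZMod 2,
            (∑ x : Fin m → ZMod 2, MM14.e (MM14.ip x (π (y + 0) + π y)))
              * MM14.e (MM14.ip a₁ (π (y + 0)) + (φ (y + 0) + φ y))
            = (2 : ℤ) ^ m * MM14.e (MM14.ip a₁ (π y)) := by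
          intro y
          rw [add_zero]
          rw [show π y + π y = 0 from MM14.pi_add_self (π y)]
          rw [show φ y + φ y = 0 from MM14.zmod2_add_self (φ y)]
          rw [add_zero, MM14.char_sum, if_pos rfl]
        simp only [hy]
        rw [← Finset.mul_sum]
        have hre : ∑ y : Fin m → ZMod 2, MM14.e (MM14.ip a₁ (π y))
            = ∑ z : Fin m → ZMod 2, MM14.e (MM14.ip a₁ z) :=
          Function.Bijective.sum_comp hπ (fun z => MM14.e (MM14.ip a₁ z))
        rw [hre]
        have : ∑ z : Fin m → ZMod 2, MM14.e (MM14.ip a₁ z)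
            = ∑ z : Fin m → ZMod 2, MM14.e (MM14.ip z a₁) :=
          Finset.sum_congr rfl fun z _ => by rw [MM14.ip_comm]
        rw [this, MM14.char_sum, if_neg ha1, mul_zero]
      · apply Finset.sum_eq_zero
        intro y _
        have hv : π (y + a₂) + π y ≠ 0 := by
          intro h0
          have := hπ.injective ((MM14.pi_add_eq_zero_iff _ _).mp h0)
          exact ha2 (add_eq_left.mp this)
        rw [MM14.char_sum, if_neg hv, zero_mul]
end

section
/- If f: F₂ⁿ → F₂ has algebraic degree d ≥ 1, then there exist linearly independent a₁,…,a_d ∈ F₂ⁿ such that the d-th order derivative D_{a_d}…D_{a_1}f is the constant one function; consequently, the all-one vector of length 2ⁿ is a sum of 2^d translates of the support indicator of f, i.e. ⊕_{a ∈ span(a₁,…,a_d)} f(x + a) = 1 for all x. -/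
/-!
Take a polynomial `q` of minimal total degree `d` representing `f`. Capping all exponents at `1`
keeps the function (`x ^ k = x` on `ZMod 2` for `k ≠ 0`) and does not raise the degree, so `q`
may be taken multilinear; pick a monomial `X^S` of `q` with `|S| = d`, and let the `a_i` be the
unit vectors `e_j`, `j ∈ S`. The `d`-th derivative in the directions `a_i` is the sum of `f` over
the cube `x + span(a)`. Over such a cube the sum of a monomial factors coordinatewise and vanishes
unless the monomial contains every `X_j`, `j ∈ S`; by the degree bound only `X^S` does, and its
coefficient is `1`.
-/

open MvPolynomial Finset

namespace ZMod

lemma pow_eq_self_of_ne_zero (x : ZMod 2) {k : ℕ} (hk : k ≠ 0) : x ^ k = x := by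
  fin_cases x
  · exact zero_pow hk
  · exact one_pow k

lemma eq_one_of_ne_zero (x : ZMod 2) (hx : x ≠ 0) : x = 1 :=
  Fin.eq_one_of_ne_zero x hx

lemma sum_univ_two {M : Type*} [AddCommMonoid M] (g : ZMod 2 → M) :
    ∑ y : ZMod 2, g y = g 0 + g 1 :=
  Fin.sum_univ_two g

lemma sum_add_pow (x : ZMod 2) (k : ℕ) :
    ∑ y : ZMod 2, (x + y) ^ k = if k ≠ 0 then 1 else 0 := by
  rw [sum_univ_two]
  by_cases hk : k = 0
  · simp only [hk, pow_zero, ne_eq, not_true_eq_false, if_false]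
    decide
  · simp only [pow_eq_self_of_ne_zero _ hk, ne_eq, hk, not_false_eq_true, if_true]
    fin_cases x <;> decide

end ZMod

theorem foldl_bderiv_ofFn {V : Type} [AddCommGroup V] [Module (ZMod 2) V] {d : ℕ}
    (a : Fin d → V) (f : V → ZMod 2) (x : V) :
    (List.ofFn a).foldl bderiv f x = ∑ c : Fin d → ZMod 2, f (x + ∑ i, c i • a i) := by
  induction d generalizing f with
  | zero => simp
  | succ d ih =>
    rw [List.ofFn_succ, List.foldl_cons, ih, ← (Fin.consEquiv fun _ => ZMod 2).sum_comp,
      Fintype.sum_prod_type, ZMod.sum_univ_two, ← sum_add_distrib]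
    refine sum_congr rfl fun c _ => ?_
    simp only [bderiv, Fin.consEquiv_apply, Fin.sum_univ_succ, Fin.cons_zero, Fin.cons_succ,
      zero_smul, one_smul, zero_add]
    rw [add_comm, add_right_comm, add_assoc]

theorem LinearIndependent.finsum_mem_span_range {R V M ι : Type*} [Semiring R] [Fintype R]
    [AddCommMonoid V] [Module R V] [AddCommMonoid M] [Fintype ι] [DecidableEq ι] {a : ι → V}
    (ha : LinearIndependent R a) (g : V → M) :
    ∑ᶠ v ∈ (Submodule.span R (Set.range a) : Set V), g v = ∑ c : ι → R, g (∑ i, c i • a i) := by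
  rw [← Fintype.range_linearCombination, LinearMap.coe_range,
    finsum_mem_range ha.fintypeLinearCombination_injective, finsum_eq_sum_of_fintype]
  simp only [Fintype.linearCombination_apply]

section Cube

variable {ι σ : Type*} [Fintype ι] [DecidableEq σ]

lemma sum_smul_single_apply_self {R : Type*} [Semiring R] (e : ι ↪ σ) (c : ι → R) (i : ι) :
    (∑ i', c i' • Pi.single (e i') (1 : R)) (e i) = c i := by
  classical
  simp [Finset.sum_apply, Pi.single_apply]

lemma sum_smul_single_apply_of_notMem {R : Type*} [Semiring R] (e : ι ↪ σ) (c : ι → R) {j : σ}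
    (hj : j ∉ univ.map e) : (∑ i, c i • Pi.single (e i) (1 : R)) j = 0 := by
  simp_all [Finset.sum_apply]

variable [Fintype σ]

lemma sum_prod_add_cube_pow [DecidableEq ι] (e : ι ↪ σ) (x : σ → ZMod 2) (m : σ →₀ ℕ) :
    ∑ c : ι → ZMod 2, ∏ j, (x + ∑ i, c i • Pi.single (e i) 1 : σ → ZMod 2) j ^ m j =
      (if ∀ i, m (e i) ≠ 0 then 1 else 0) * ∏ j ∈ (univ.map e)ᶜ, x j ^ m j := by
  have hsplit : ∀ c : ι → ZMod 2,
      ∏ j, (x + ∑ i, c i • Pi.single (e i) 1 : σ → ZMod 2) j ^ m j =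
        (∏ i, (x (e i) + c i) ^ m (e i)) * ∏ j ∈ (univ.map e)ᶜ, x j ^ m j := by
    intro c
    rw [← prod_mul_prod_compl (univ.map e), prod_map]
    congr 1 <;> refine prod_congr rfl fun j hj => ?_
    · rw [Pi.add_apply, sum_smul_single_apply_self]
    · rw [Pi.add_apply, sum_smul_single_apply_of_notMem e c (mem_compl.1 hj), add_zero]
  simp_rw [hsplit, ← sum_mul]
  congr 1
  rw [← Fintype.prod_sum fun i (y : ZMod 2) => (x (e i) + y) ^ m (e i)]
  simp_rw [ZMod.sum_add_pow, prod_boole, mem_univ, true_imp_iff]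

lemma Finsupp.eq_ite_mem_map_of_degree_le (e : ι ↪ σ) {m : σ →₀ ℕ} (h : ∀ i, m (e i) ≠ 0)
    (hdeg : m.degree ≤ Fintype.card ι) (j : σ) : m j = if j ∈ univ.map e then 1 else 0 := by
  have hsplit : m.degree = ∑ i, m (e i) + ∑ j ∈ (univ.map e)ᶜ, m j := by
    rw [Finsupp.degree_eq_sum, ← sum_add_sum_compl (univ.map e), sum_map]
  have hone_le : ∀ i ∈ univ, 1 ≤ m (e i) := fun i _ => Nat.one_le_iff_ne_zero.2 (h i)
  have hones := Finset.sum_le_sum hone_le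
  rw [Fintype.card_eq_sum_ones] at hdeg
  have hon : ∑ i : ι, 1 = ∑ i, m (e i) := by omega
  have hoff : ∑ j ∈ (univ.map e)ᶜ, m j = 0 := by omega
  split_ifs with hj
  · obtain ⟨i, -, rfl⟩ := mem_map.1 hj
    exact ((sum_eq_sum_iff_of_le hone_le).1 hon i (mem_univ i)).symm
  · exact sum_eq_zero_iff.1 hoff j (mem_compl.2 hj)

end Cube

namespace MvPolynomial

section Multilinearize

variable {σ R : Type*} [CommSemiring R]

noncomputable def multilinearize (p : MvPolynomial σ R) : MvPolynomial σ R :=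
  ∑ m ∈ p.support, monomial (m.mapRange (fun k => min k 1) (by simp)) (coeff m p)

lemma support_mapRange_min_one (m : σ →₀ ℕ) :
    (m.mapRange (fun k => min k 1) (by simp)).support = m.support := by
  ext i
  simp only [Finsupp.mem_support_iff, Finsupp.mapRange_apply]
  omega

lemma multilinearize_mem_restrictDegree (p : MvPolynomial σ R) :
    multilinearize p ∈ restrictDegree σ R 1 := by
  classical
  rw [mem_restrictDegree]
  intro m hm i
  obtain ⟨m', -, hm'⟩ := mem_biUnion.1 (support_sum hm)
  rw [mem_singleton.1 (support_monomial_subset hm'), Finsupp.mapRange_apply]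
  exact min_le_right _ _

lemma totalDegree_multilinearize_le (p : MvPolynomial σ R) :
    (multilinearize p).totalDegree ≤ p.totalDegree := by
  refine (totalDegree_finsetSum _ _).trans (Finset.sup_le fun m hm => ?_)
  refine (totalDegree_monomial_le _ _).trans (le_trans ?_ (le_totalDegree hm))
  rw [Finsupp.sum, Finsupp.sum, support_mapRange_min_one]
  exact sum_le_sum fun i _ => min_le_left _ _

lemma eval_multilinearize (p : MvPolynomial σ (ZMod 2)) (x : σ → ZMod 2) :
    eval x (multilinearize p) = eval x p := by
  conv_rhs => rw [← support_sum_monomial_coeff p]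
  simp only [multilinearize, map_sum, eval_monomial]
  refine sum_congr rfl fun m _ => congrArg _ ?_
  rw [Finsupp.prod, Finsupp.prod, support_mapRange_min_one]
  refine prod_congr rfl fun i hi => ?_
  have hmi : m i ≠ 0 := Finsupp.mem_support_iff.1 hi
  rw [Finsupp.mapRange_apply, ZMod.pow_eq_self_of_ne_zero _ (by omega),
    ZMod.pow_eq_self_of_ne_zero _ hmi]

end Multilinearize

theorem exists_mem_restrictDegree_totalDegree_eq_bdeg {σ : Type} [Finite σ]
    (f : (σ → ZMod 2) → ZMod 2) :
    ∃ q ∈ restrictDegree σ (ZMod 2) 1, (∀ x, eval x q = f x) ∧ q.totalDegree = bdeg f := by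
  have hrep : { d | ∃ p : MvPolynomial σ (ZMod 2),
      (∀ x, eval x p = f x) ∧ p.totalDegree = d }.Nonempty := by
    obtain ⟨p, -, hp⟩ := Submodule.mem_map.1
      ((map_restrict_dom_evalₗ (ZMod 2) σ).symm ▸ Submodule.mem_top : f ∈ _)
    exact ⟨_, p, fun x => congrFun hp x, rfl⟩
  obtain ⟨p, hp, hpd⟩ := Nat.sInf_mem hrep
  have hq : ∀ x, eval x (multilinearize p) = f x :=
    fun x => (eval_multilinearize p x).trans (hp x)
  exact ⟨_, multilinearize_mem_restrictDegree p, hq,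
    le_antisymm ((totalDegree_multilinearize_le p).trans hpd.le) (Nat.sInf_le ⟨_, hq, rfl⟩)⟩

theorem exists_embedding_mem_support {σ R : Type*} [LinearOrder σ] [CommSemiring R]
    {q : MvPolynomial σ R} (hq : q ∈ restrictDegree σ R 1) (hq0 : q ≠ 0) {d : ℕ}
    (hd : q.totalDegree = d) :
    ∃ e : Fin d ↪ σ, ∃ m ∈ q.support, ∀ j, m j = if j ∈ univ.map e then 1 else 0 := by
  obtain ⟨m, hm, hmd⟩ := exists_mem_eq_sup q.support (support_nonempty.2 hq0)
    fun s => s.sum fun _ k => k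
  have hm_one : ∀ j ∈ m.support, m j = 1 := fun j hj => by
    have := Finsupp.mem_support_iff.1 hj
    have := (mem_restrictDegree ..).1 hq m hm j
    omega
  have hcard : m.support.card = d := by
    rw [← hd, totalDegree, hmd, Finsupp.sum, card_eq_sum_ones]
    exact sum_congr rfl fun j hj => (hm_one j hj).symm
  refine ⟨(m.support.orderEmbOfFin hcard).toEmbedding, m, hm, fun j => ?_⟩
  rw [map_orderEmbOfFin_univ]
  split_ifs with hj
  · exact hm_one j hj
  · exact Finsupp.notMem_support_iff.1 hj

/-- Only monomials containing every `X (e i)` survive the cube sum, and the degree bound leaves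
`X^m` alone among them. -/
theorem sum_eval_cube_eq_coeff {ι σ : Type*} [Fintype ι] [DecidableEq ι] [Fintype σ]
    [DecidableEq σ] (e : ι ↪ σ) {q : MvPolynomial σ (ZMod 2)} (hq : q.totalDegree ≤ Fintype.card ι)
    {m : σ →₀ ℕ} (hm : ∀ j, m j = if j ∈ univ.map e then 1 else 0) (x : σ → ZMod 2) :
    ∑ c : ι → ZMod 2, eval (x + ∑ i, c i • Pi.single (e i) 1) q = coeff m q := by
  simp_rw [eval_eq', Finset.sum_comm (s := univ), ← mul_sum, sum_prod_add_cube_pow]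
  rw [sum_eq_single m]
  · have hme : ∀ i, m (e i) ≠ 0 := fun i => by simp [hm]
    have hoff : ∏ j ∈ (univ.map e)ᶜ, x j ^ m j = 1 :=
      prod_eq_one fun j hj => by rw [hm, if_neg (mem_compl.1 hj), pow_zero]
    rw [if_pos hme, hoff, one_mul, mul_one]
  · intro m' hm' hne
    rw [ite_eq_right_iff.2 fun h => absurd (Finsupp.ext fun j => ?_) hne, zero_mul, mul_zero]
    rw [hm, Finsupp.eq_ite_mem_map_of_degree_le e h ((le_totalDegree hm').trans hq)]
  · intro hm'
    rw [notMem_support_iff.1 hm', zero_mul]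

end MvPolynomial

/-- If `deg f = d ≥ 1`, there are linearly independent `a₁, …, a_d` such that the `d`-th
order derivative `D_{a_d} … D_{a_1} f` is constant one; consequently the sum of `f` over
each coset of `span(a₁,…,a_d)` is one. -/
theorem stmt16 {n d : ℕ} (f : (Fin n → ZMod 2) → ZMod 2)
    (hd : bdeg f = d) (h1 : 1 ≤ d) :
    ∃ a : Fin d → (Fin n → ZMod 2),
      LinearIndependent (ZMod 2) a
      ∧ (∀ x : Fin n → ZMod 2, (List.ofFn a).foldl bderiv f x = 1)
      ∧ (∀ x : Fin n → ZMod 2,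
          ∑ᶠ v ∈ (↑(Submodule.span (ZMod 2) (Set.range a)) : Set (Fin n → ZMod 2)),
            f (x + v) = 1) := by
  obtain ⟨q, hq, hqf, hqd⟩ := exists_mem_restrictDegree_totalDegree_eq_bdeg f
  have hq0 : q ≠ 0 := by
    rintro rfl
    rw [totalDegree_zero] at hqd
    omega
  obtain ⟨e, m, hm, hme⟩ := exists_embedding_mem_support hq hq0 (hqd.trans hd)
  set a : Fin d → Fin n → ZMod 2 := fun i => Pi.single (e i) 1
  have ha : LinearIndependent (ZMod 2) a :=
    (Pi.linearIndependent_single_one (Fin n) (ZMod 2)).comp e e.injective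
  have hcube : ∀ x, ∑ c : Fin d → ZMod 2, f (x + ∑ i, c i • a i) = 1 := fun x => by
    simp_rw [← hqf]
    rw [sum_eval_cube_eq_coeff e (by rw [hqd, hd, Fintype.card_fin]) hme x]
    exact ZMod.eq_one_of_ne_zero _ (mem_support_iff.1 hm)
  refine ⟨a, ha, fun x => (foldl_bderiv_ofFn a f x).trans (hcube x), fun x => ?_⟩
  rw [ha.finsum_mem_span_range fun v => f (x + v)]
  exact hcube x
end
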